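/- arXiv:1204.1438 — 2 statements merged into one kernel-verified Lean document; each statement's English description precedes it below -/
import Mathlib

section
/- If B is a Roman bondage set of G of minimum cardinality b_R(G), then γ_R(G − B) = γ_R(G) + 1. -/
/-! Deleting a single edge raises the Roman domination number by at most one: given an optimal
Roman dominating function, raise a `0`-endpoint of the edge to `1`; then the edge no longer joins
a `0`-vertex to a `2`-vertex, so the function stays Roman dominating without it. By minimality of
`B`, deleting `B` minus one of its edges does not raise `γ_R`, and deleting that last edge raises it
by at most one. -/

open SimpleGraph Finset

/-- A Roman dominating function: values in {0,1,2}, every 0-vertex has a neighbor with value 2. -/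
def IsRDF {V : Type*} (G : SimpleGraph V) (f : V → ℕ) : Prop :=
  (∀ v, f v ≤ 2) ∧ ∀ v, f v = 0 → ∃ u, G.Adj v u ∧ f u = 2

/-- The Roman domination number: minimum weight of a Roman dominating function. -/
noncomputable def romanDom {V : Type*} [Fintype V] (G : SimpleGraph V) : ℕ :=
  sInf {k | ∃ f : V → ℕ, IsRDF G f ∧ ∑ v, f v = k}

/-- A dominating set. -/
def IsDomSet {V : Type*} (G : SimpleGraph V) (S : Set V) : Prop :=
  ∀ v, v ∈ S ∨ ∃ u ∈ S, G.Adj u v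

/-- The domination number. -/
noncomputable def domNum {V : Type*} [Fintype V] (G : SimpleGraph V) : ℕ :=
  sInf {k | ∃ S : Set V, IsDomSet G S ∧ S.ncard = k}

/-- Degree of a vertex. -/
noncomputable def deg {V : Type*} (G : SimpleGraph V) (v : V) : ℕ :=
  (G.neighborSet v).ncard

/-- Maximum degree. -/
noncomputable def maxDeg {V : Type*} (G : SimpleGraph V) : ℕ :=
  sSup {d | ∃ v, deg G v = d}

/-- Minimum degree. -/
noncomputable def minDeg {V : Type*} (G : SimpleGraph V) : ℕ :=
  sInf {d | ∃ v, deg G v = d}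

/-- The Roman bondage number: minimum size of an edge set whose deletion increases `romanDom`. -/
noncomputable def romanBondage {V : Type*} [Fintype V] (G : SimpleGraph V) : ℕ :=
  sInf {k | ∃ B : Set (Sym2 V), B ⊆ G.edgeSet ∧
    romanDom (G.deleteEdges B) > romanDom G ∧ B.ncard = k}

/-- The bondage number: minimum size of an edge set whose deletion increases `domNum`. -/
noncomputable def bondage {V : Type*} [Fintype V] (G : SimpleGraph V) : ℕ :=
  sInf {k | ∃ B : Set (Sym2 V), B ⊆ G.edgeSet ∧
    domNum (G.deleteEdges B) > domNum G ∧ B.ncard = k}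

/-- A vertex cover. -/
def IsVC {V : Type*} (G : SimpleGraph V) (S : Set V) : Prop :=
  ∀ u v, G.Adj u v → u ∈ S ∨ v ∈ S

/-- The vertex covering number. -/
noncomputable def vcNum {V : Type*} [Fintype V] (G : SimpleGraph V) : ℕ :=
  sInf {k | ∃ S : Set V, IsVC G S ∧ S.ncard = k}

section RomanDomination

variable {V : Type*}

lemma IsRDF.update_one [DecidableEq V] {G : SimpleGraph V} {f : V → ℕ} (hf : IsRDF G f) {u : V}
    (hu : f u ≠ 2) : IsRDF G (Function.update f u 1) := by
  refine ⟨fun w => ?_, fun w hw => ?_⟩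
  · rcases eq_or_ne w u with rfl | hwu
    · simp
    · simpa [hwu] using hf.1 w
  · rcases eq_or_ne w u with rfl | hwu
    · simp at hw
    · obtain ⟨x, hwx, hx⟩ := hf.2 w (by simpa [hwu] using hw)
      have hxu : x ≠ u := by rintro rfl; exact hu hx
      exact ⟨x, hwx, by simpa [hxu] using hx⟩

lemma IsRDF.deleteEdges {G : SimpleGraph V} {f : V → ℕ} (hf : IsRDF G f) {B : Set (Sym2 V)}
    (hB : ∀ a b, s(a, b) ∈ B → f a = 0 → f b ≠ 2) : IsRDF (G.deleteEdges B) f := by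
  refine ⟨hf.1, fun w hw => ?_⟩
  obtain ⟨x, hwx, hx⟩ := hf.2 w hw
  exact ⟨x, deleteEdges_adj.2 ⟨hwx, fun hB' => hB w x hB' hw hx⟩, hx⟩

variable [Fintype V]

lemma romanDom_exists (G : SimpleGraph V) : ∃ f : V → ℕ, IsRDF G f ∧ ∑ v, f v = romanDom G :=
  Nat.sInf_mem (s := {k | ∃ f : V → ℕ, IsRDF G f ∧ ∑ v, f v = k})
    ⟨_, fun _ => 2, ⟨fun _ => le_rfl, fun _ h => by simp at h⟩, rfl⟩

lemma romanDom_le {G : SimpleGraph V} {f : V → ℕ} (hf : IsRDF G f) : romanDom G ≤ ∑ v, f v :=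
  Nat.sInf_le ⟨f, hf, rfl⟩

lemma romanDom_deleteEdges_singleton_le (G : SimpleGraph V) (e : Sym2 V) :
    romanDom (G.deleteEdges {e}) ≤ romanDom G + 1 := by
  classical
  obtain ⟨f, hf, hsum⟩ := romanDom_exists G
  by_cases hzero : ∃ u ∈ e, f u = 0
  · obtain ⟨u, hue, hu⟩ := hzero
    have hg : IsRDF G (Function.update f u 1) := hf.update_one (by omega)
    refine (romanDom_le (hg.deleteEdges ?_)).trans_eq ?_
    · rintro a b hab ha
      rw [Set.mem_singleton_iff] at hab
      subst hab
      rcases Sym2.mem_iff.1 hue with rfl | rfl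
      · simp at ha
      · simp
    · rw [sum_update_of_mem (mem_univ u), ← hsum,
        sum_eq_add_sum_sdiff_singleton_of_mem (mem_univ u) f, hu]
      ring
  · push Not at hzero
    refine (romanDom_le (hf.deleteEdges ?_)).trans (by omega)
    rintro a b hab ha
    rw [Set.mem_singleton_iff] at hab
    exact absurd ha (hzero a (hab ▸ Sym2.mem_mk_left a b))

lemma romanDom_deleteEdges_le_of_ncard_lt {G : SimpleGraph V} {B : Set (Sym2 V)}
    (hB : B ⊆ G.edgeSet) (hcard : B.ncard < romanBondage G) :
    romanDom (G.deleteEdges B) ≤ romanDom G := by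
  by_contra! hgt
  exact hcard.not_ge (Nat.sInf_le ⟨B, hB, hgt, rfl⟩)

end RomanDomination

theorem stmt6_general {V : Type*} [Fintype V] (G : SimpleGraph V)
    (B : Set (Sym2 V)) (hB : B ⊆ G.edgeSet)
    (hbond : romanDom (G.deleteEdges B) > romanDom G)
    (hmin : B.ncard = romanBondage G) :
    romanDom (G.deleteEdges B) = romanDom G + 1 := by
  obtain ⟨e, he⟩ : B.Nonempty := Set.nonempty_iff_ne_empty.2 (by rintro rfl; simp at hbond)
  have hsplit : G.deleteEdges B = (G.deleteEdges (B \ {e})).deleteEdges {e} := by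
    rw [deleteEdges_deleteEdges, Set.sdiff_union_self,
      Set.union_eq_left.2 (Set.singleton_subset_iff.2 he)]
  have hrest : romanDom (G.deleteEdges (B \ {e})) ≤ romanDom G :=
    romanDom_deleteEdges_le_of_ncard_lt (Set.sdiff_subset.trans hB)
      (hmin ▸ Set.ncard_sdiff_singleton_lt_of_mem he)
  have hlast := romanDom_deleteEdges_singleton_le (G.deleteEdges (B \ {e})) e
  rw [← hsplit] at hlast
  omega

theorem stmt6 {V : Type*} [Fintype V] (G : SimpleGraph V)
    (hΔ : 2 ≤ maxDeg G) (B : Set (Sym2 V)) (hB : B ⊆ G.edgeSet)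
    (hbond : romanDom (G.deleteEdges B) > romanDom G)
    (hmin : B.ncard = romanBondage G) :
    romanDom (G.deleteEdges B) = romanDom G + 1 :=
  stmt6_general G B hB hbond hmin
end

section
/- Let G be a connected graph of order n ≥ 3 such that γ_R(G) = γ(G) + 1. If B ⊆ E(G) satisfies γ_R(G − B) = γ_R(G), then Δ(G − B) = Δ(G). -/
open SimpleGraph Finset

/-! In a minimum Roman dominating function `f` of weight `γ + 1` the support already has at least
`γ` vertices, so exactly one vertex `v` has value `2` and every `0`-vertex is a neighbour of `v`;
hence `deg v ≥ n - γ`. As the complement of any neighbourhood dominates, `Δ ≤ n - γ` always, so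
`Δ = n - γ` whenever `γ_R = γ + 1 < n`. Deleting edges can only raise `γ`, while
`γ_R(G - B) ≥ γ(G - B) + 1`; so `γ_R(G - B) = γ_R(G)` forces `γ(G - B) = γ(G)`, and both maximum
degrees equal `n - γ(G)`. Connectedness and `n ≥ 3` give a vertex of degree `2`, hence `γ ≤ n - 2`,
which excludes the constant function `1` as a minimum Roman dominating function. -/

section

variable {V : Type*}

lemma deg_eq_degree (G : SimpleGraph V) (v : V) [Fintype (G.neighborSet v)] :
    deg G v = G.degree v := by
  rw [deg, ← Nat.card_coe_set_eq, Nat.card_eq_fintype_card, card_neighborSet_eq_degree]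

lemma IsDomSet.mono {G H : SimpleGraph V} {S : Set V} (hle : G ≤ H) (hS : IsDomSet G S) :
    IsDomSet H S := fun v => (hS v).imp_right fun ⟨u, hu, huv⟩ => ⟨u, hu, hle huv⟩

lemma isDomSet_compl_neighborSet (G : SimpleGraph V) (v : V) : IsDomSet G (G.neighborSet v)ᶜ :=
  fun u => (em (u ∈ G.neighborSet v)).symm.imp id fun hu => ⟨v, G.loopless.irrefl v, hu⟩

lemma IsRDF.isDomSet_support {G : SimpleGraph V} {f : V → ℕ} (hf : IsRDF G f) :
    IsDomSet G {v | f v ≠ 0} := fun v =>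
  (em (f v ≠ 0)).imp id fun h =>
    let ⟨u, hvu, hu⟩ := hf.2 v (not_not.1 h)
    ⟨u, by simp [hu], hvu.symm⟩

variable [Fintype V] {G : SimpleGraph V}

lemma exists_isDomSet_ncard_eq_domNum (G : SimpleGraph V) :
    ∃ S, IsDomSet G S ∧ S.ncard = domNum G :=
  Nat.sInf_mem (s := {k | ∃ S, IsDomSet G S ∧ S.ncard = k})
    ⟨_, Set.univ, fun _ => Or.inl trivial, rfl⟩

lemma IsDomSet.domNum_le {S : Set V} (hS : IsDomSet G S) : domNum G ≤ S.ncard :=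
  Nat.sInf_le ⟨S, hS, rfl⟩

lemma domNum_antitone : Antitone (domNum : SimpleGraph V → ℕ) := fun G H hle => by
  obtain ⟨S, hS, hcard⟩ := exists_isDomSet_ncard_eq_domNum G
  exact hcard ▸ (hS.mono hle).domNum_le

lemma domNum_add_deg_le (G : SimpleGraph V) (v : V) : domNum G + deg G v ≤ Fintype.card V := by
  have hdom := (isDomSet_compl_neighborSet G v).domNum_le
  have hsplit := Set.ncard_add_ncard_compl (G.neighborSet v)
  rw [Nat.card_eq_fintype_card] at hsplit
  rw [deg]
  omega

lemma SimpleGraph.Connected.exists_two_le_deg (hG : G.Connected) (hn : 3 ≤ Fintype.card V) :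
    ∃ v, 2 ≤ deg G v := by
  classical
  by_contra! hdeg
  have hsum : ∑ v, G.degree v ≤ ∑ _v : V, 1 :=
    Finset.sum_le_sum fun v _ => by have := hdeg v; rw [deg_eq_degree] at this; omega
  have hedges := hG.card_vert_le_card_edgeSet_add_one
  rw [sum_degrees_eq_twice_card_edges, sum_const, card_univ, smul_eq_mul, mul_one] at hsum
  rw [Nat.card_eq_fintype_card, Nat.card_eq_fintype_card, ← edgeFinset_card] at hedges
  omega

lemma SimpleGraph.Connected.domNum_add_two_le_card (hG : G.Connected) (hn : 3 ≤ Fintype.card V) :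
    domNum G + 2 ≤ Fintype.card V := by
  obtain ⟨v, hv⟩ := hG.exists_two_le_deg hn
  have := domNum_add_deg_le G v
  omega

lemma exists_isRDF_sum_eq_romanDom (G : SimpleGraph V) :
    ∃ f, IsRDF G f ∧ ∑ v, f v = romanDom G :=
  Nat.sInf_mem (s := {k | ∃ f : V → ℕ, IsRDF G f ∧ ∑ v, f v = k})
    ⟨_, fun _ => 1, ⟨fun _ => one_le_two, fun _ h => absurd h one_ne_zero⟩, rfl⟩

namespace IsRDF

variable {f : V → ℕ} {v : V}

lemma sum_eq_card_add_card (hf : IsRDF G f) :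
    ∑ u, f u = #{u | f u ≠ 0} + #{u | f u = 2} := by
  rw [card_filter, card_filter, ← sum_add_distrib]
  refine sum_congr rfl fun u _ => ?_
  have := hf.1 u
  split_ifs <;> omega

lemma domNum_le_card_support (hf : IsRDF G f) : domNum G ≤ #{u | f u ≠ 0} := by
  simpa [Set.ncard_eq_toFinset_card'] using hf.isDomSet_support.domNum_le

lemma sum_eq_card_of_forall_ne_two (hf : IsRDF G f) (h2 : ∀ v, f v ≠ 2) :
    ∑ u, f u = Fintype.card V := by
  have hone : ∀ u, f u = 1 := fun u => by
    obtain h0 | hpos := Nat.eq_zero_or_pos (f u)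
    · obtain ⟨w, -, hw⟩ := hf.2 u h0
      exact absurd hw (h2 w)
    · have := hf.1 u
      have := h2 u
      omega
  simp [hone]

lemma domNum_add_one_le_sum (hf : IsRDF G f) (hv : f v = 2) : domNum G + 1 ≤ ∑ u, f u := by
  have htwo : 0 < #{u | f u = 2} := card_pos.2 ⟨v, by simpa⟩
  have := hf.domNum_le_card_support
  rw [hf.sum_eq_card_add_card]
  omega

lemma card_le_domNum_add_deg (hf : IsRDF G f) (hv : f v = 2)
    (hsum : ∑ u, f u = domNum G + 1) : Fintype.card V ≤ domNum G + deg G v := by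
  have hsplit := hf.sum_eq_card_add_card
  have hsupp := hf.domNum_le_card_support
  have htwo_pos : 0 < #{u | f u = 2} := card_pos.2 ⟨v, by simpa⟩
  have htwo : ∀ w, f w = 2 → w = v := fun w hw =>
    (card_le_one (s := {u | f u = 2})).1 (by omega) w (by simpa) v (by simpa)
  have hzero : #{u | f u = 0} ≤ deg G v := by
    classical
    rw [deg_eq_degree, ← card_neighborFinset_eq_degree]
    refine card_le_card fun u hu => ?_
    obtain ⟨w, huw, hw⟩ := hf.2 u (by simpa using hu)
    simpa [htwo w hw] using huw.symm
  have hcard : #{u | f u = 0} + #{u | f u ≠ 0} = Fintype.card V :=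
    card_filter_add_card_filter_not _
  omega

end IsRDF

lemma domNum_add_one_le_romanDom (h : romanDom G < Fintype.card V) :
    domNum G + 1 ≤ romanDom G := by
  obtain ⟨f, hf, hsum⟩ := exists_isRDF_sum_eq_romanDom G
  by_cases h2 : ∃ v, f v = 2
  · obtain ⟨v, hv⟩ := h2
    exact hsum ▸ hf.domNum_add_one_le_sum hv
  · have := hf.sum_eq_card_of_forall_ne_two (not_exists.1 h2)
    omega

lemma maxDeg_add_domNum (h : romanDom G = domNum G + 1) (hlt : romanDom G < Fintype.card V) :
    maxDeg G + domNum G = Fintype.card V := by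
  obtain ⟨f, hf, hsum⟩ := exists_isRDF_sum_eq_romanDom G
  obtain ⟨v, hv⟩ : ∃ v, f v = 2 := by
    by_contra! h2
    have := hf.sum_eq_card_of_forall_ne_two h2
    omega
  have hdeg_v := hf.card_le_domNum_add_deg hv (hsum.trans h)
  have hmax : IsGreatest {d | ∃ v, deg G v = d} (deg G v) := by
    refine ⟨⟨v, rfl⟩, ?_⟩
    rintro _ ⟨u, rfl⟩
    have := domNum_add_deg_le G u
    omega
  have := domNum_add_deg_le G v
  rw [maxDeg, hmax.csSup_eq]
  omega

end

theorem stmt7_general {V : Type*} [Fintype V] (G : SimpleGraph V)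
    (hconn : G.Connected) (hn : 3 ≤ Fintype.card V)
    (hγ : romanDom G = domNum G + 1)
    (B : Set (Sym2 V))
    (heq : romanDom (G.deleteEdges B) = romanDom G) :
    maxDeg (G.deleteEdges B) = maxDeg G := by
  have hlt : romanDom G < Fintype.card V := by
    have := hconn.domNum_add_two_le_card hn
    omega
  have hltB : romanDom (G.deleteEdges B) < Fintype.card V := heq ▸ hlt
  have hdomNum : domNum (G.deleteEdges B) = domNum G := by
    refine le_antisymm ?_ (domNum_antitone (G.deleteEdges_le B))
    have := domNum_add_one_le_romanDom hltB
    omega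
  have hG := maxDeg_add_domNum hγ hlt
  have hGB := maxDeg_add_domNum (by rw [heq, hγ, hdomNum]) hltB
  omega

theorem stmt7 {V : Type*} [Fintype V] (G : SimpleGraph V)
    (hconn : G.Connected) (hn : 3 ≤ Fintype.card V)
    (hγ : romanDom G = domNum G + 1)
    (B : Set (Sym2 V)) (hB : B ⊆ G.edgeSet)
    (heq : romanDom (G.deleteEdges B) = romanDom G) :
    maxDeg (G.deleteEdges B) = maxDeg G :=
  stmt7_general G hconn hn hγ B heq
end
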